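/- Let * be any of the six measures B, BA, TA, C, BC, L, and let 𝓑 ⊆ 2^V \ {V} be a family of nonempty sets with 𝓑^⊥ its family of inclusion-minimal members. Then there exists a pure Horn CNF Φ representing the key Horn function h_𝓑 with |Φ|_* = OPT_*(𝓑) whose set of bodies is exactly 𝓑^⊥. -/

import Mathlib

open Finset

variable {V : Type*} [Fintype V] [DecidableEq V]

/-- A pure Horn CNF is a finite set of clauses `(B, v)`: body `B`, head `v`,
with `B` nonempty and `v ∉ B`. -/
def PureHorn (Φ : Finset (Finset V × V)) : Prop :=
  ∀ c ∈ Φ, c.1.Nonempty ∧ c.2 ∉ c.1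

/-- A set `W` is closed under the clauses of `Φ`. -/
def HornClosed (Φ : Finset (Finset V × V)) (W : Set V) : Prop :=
  ∀ c ∈ Φ, ↑c.1 ⊆ W → c.2 ∈ W

/-- Forward-chaining closure `F_Φ(Z)`: the smallest set containing `Z`
that is closed under the clauses of `Φ`. -/
def hornClosure (Φ : Finset (Finset V × V)) (Z : Set V) : Set V :=
  ⋂₀ {W : Set V | Z ⊆ W ∧ HornClosed Φ W}

/-- `Ψ_𝓑 = ⋀_{B ∈ 𝓑} B → (V \ B)`. -/
def keyCNF (𝓑 : Finset (Finset V)) : Finset (Finset V × V) :=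
  𝓑.biUnion fun B => (Finset.univ \ B).image fun v => (B, v)

/-- `Φ` represents the key Horn function `h_𝓑`, i.e. `Φ` is a pure Horn CNF
equivalent to `Ψ_𝓑`. -/
def Represents (𝓑 : Finset (Finset V)) (Φ : Finset (Finset V × V)) : Prop :=
  PureHorn Φ ∧ ∀ Z : Finset V, hornClosure Φ ↑Z = hornClosure (keyCNF 𝓑) ↑Z

/-- (B) number of (distinct) bodies. -/
def sizeB (Φ : Finset (Finset V × V)) : ℕ := (Φ.image Prod.fst).card
/-- (BA) body area `Σ_i |B_i|` over the distinct bodies. -/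
def sizeBA (Φ : Finset (Finset V × V)) : ℕ := ∑ B ∈ Φ.image Prod.fst, B.card
/-- (C) number of clauses `Σ_i |H_i|`. -/
def sizeC (Φ : Finset (Finset V × V)) : ℕ := Φ.card
/-- (TA) total area `Σ_i (|B_i| + |H_i|)`. -/
def sizeTA (Φ : Finset (Finset V × V)) : ℕ := sizeBA Φ + sizeC Φ
/-- (BC) bodies plus clauses `Σ_i (|H_i| + 1)`. -/
def sizeBC (Φ : Finset (Finset V × V)) : ℕ := sizeB Φ + sizeC Φ
/-- (L) number of literals `Σ_i (|B_i| + 1)·|H_i|`. -/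
def sizeL (Φ : Finset (Finset V × V)) : ℕ := ∑ c ∈ Φ, (c.1.card + 1)

/-- `μ` is one of the six size measures. -/
def IsMeasure (μ : Finset (Finset V × V) → ℕ) : Prop :=
  μ = sizeB ∨ μ = sizeBA ∨ μ = sizeTA ∨ μ = sizeC ∨ μ = sizeBC ∨ μ = sizeL

/-- `OPT_μ(𝓑)`: minimum `μ`-size of a CNF representing `h_𝓑`. -/
noncomputable def OPT (μ : Finset (Finset V × V) → ℕ) (𝓑 : Finset (Finset V)) : ℕ :=
  sInf {s : ℕ | ∃ Φ : Finset (Finset V × V), Represents 𝓑 Φ ∧ μ Φ = s}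

/-- `price_μ(S,T)`: minimum `μ`-size of a pure Horn CNF with bodies in `𝓑`
whose forward chaining from `S` reaches all of `T`. -/
noncomputable def price (μ : Finset (Finset V × V) → ℕ) (𝓑 : Finset (Finset V))
    (S T : Finset V) : ℕ :=
  sInf {s : ℕ | ∃ Φ : Finset (Finset V × V),
    PureHorn Φ ∧ (∀ c ∈ Φ, c.1 ∈ 𝓑) ∧ ↑T ⊆ hornClosure Φ ↑S ∧ μ Φ = s}

/-!
Given a minimum representation, replace each body by a minimal member of `𝓑` inside it. The result
still represents `h_𝓑`, none of the six measures grows (bodies and clauses can only shrink or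
merge), and its bodies are minimal members of `𝓑`. Conversely every `B ∈ 𝓑^⊥` must be a body,
since `h_𝓑` derives a variable outside `B` from `B`, which needs a body inside `B`.
-/

lemma exists_minimal_le_selector {β : Type*} [PartialOrder β] [WellFoundedLT β] (P : β → Prop) :
    ∃ r : β → β, ∀ b a, P a → a ≤ b → r b ≤ b ∧ Minimal P (r b) := by
  have hsel : ∀ b, ∃ c, ∀ a, P a → a ≤ b → c ≤ b ∧ Minimal P c := fun b => by
    by_cases h : ∃ a, P a ∧ a ≤ b
    · obtain ⟨a, ha, hab⟩ := h
      obtain ⟨c, hca, hc⟩ := exists_minimal_le_of_wellFoundedLT P a ha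
      exact ⟨c, fun _ _ _ => ⟨hca.trans hab, hc⟩⟩
    · exact ⟨b, fun a ha hab => absurd ⟨a, ha, hab⟩ h⟩
  choose r hr using hsel
  exact ⟨r, hr⟩

section HornClosure

variable {α : Type*} {Φ Ψ : Finset (Finset α × α)} {Z W : Set α}

lemma subset_hornClosure (Φ : Finset (Finset α × α)) (Z : Set α) : Z ⊆ hornClosure Φ Z :=
  fun _ hv _ hW => hW.1 hv

lemma hornClosure_subset (hZW : Z ⊆ W) (hW : HornClosed Φ W) : hornClosure Φ Z ⊆ W :=
  Set.sInter_subset_of_mem ⟨hZW, hW⟩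

lemma hornClosed_hornClosure (Φ : Finset (Finset α × α)) (Z : Set α) :
    HornClosed Φ (hornClosure Φ Z) :=
  fun c hc hsub _ hW => hW.2 c hc fun _ hx => hsub hx _ hW

lemma head_mem_hornClosure {c : Finset α × α} (hc : c ∈ Φ) : c.2 ∈ hornClosure Φ c.1 :=
  hornClosed_hornClosure Φ _ c hc (subset_hornClosure Φ _)

lemma hornClosure_subset_hornClosure (h : ∀ W, HornClosed Ψ W → HornClosed Φ W) :
    hornClosure Φ Z ⊆ hornClosure Ψ Z :=
  hornClosure_subset (subset_hornClosure Ψ Z) (h _ (hornClosed_hornClosure Ψ Z))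

end HornClosure

section KeyCNF

variable {α : Type*} [Fintype α] [DecidableEq α] {𝓑 : Finset (Finset α)}
  {Φ : Finset (Finset α × α)}

lemma mem_keyCNF {c : Finset α × α} : c ∈ keyCNF 𝓑 ↔ c.1 ∈ 𝓑 ∧ c.2 ∉ c.1 := by
  obtain ⟨B, v⟩ := c
  simp only [keyCNF, mem_biUnion, mem_image, mem_sdiff, mem_univ, true_and, Prod.mk.injEq]
  constructor
  · rintro ⟨B', hB', v', hv', rfl, rfl⟩
    exact ⟨hB', hv'⟩
  · rintro ⟨hB, hv⟩
    exact ⟨B, hB, v, hv, rfl, rfl⟩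

lemma HornClosed.eq_univ_of_keyCNF {W : Set α} (hW : HornClosed (keyCNF 𝓑) W) {B : Finset α}
    (hB : B ∈ 𝓑) (hBW : ↑B ⊆ W) : W = Set.univ := by
  refine Set.eq_univ_of_forall fun v => ?_
  by_cases hv : v ∈ B
  · exact hBW hv
  · exact hW (B, v) (mem_keyCNF.mpr ⟨hB, hv⟩) hBW

lemma represents_keyCNF (hne : ∀ B ∈ 𝓑, B.Nonempty) : Represents 𝓑 (keyCNF 𝓑) :=
  ⟨fun _ hc => ⟨hne _ (mem_keyCNF.mp hc).1, (mem_keyCNF.mp hc).2⟩, fun _ => rfl⟩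

/-- A body containing no member of `𝓑` is closed under `Ψ_𝓑`, so the clause could not fire. -/
lemma Represents.exists_mem_subset_body (hΦ : Represents 𝓑 Φ) {c : Finset α × α} (hc : c ∈ Φ) :
    ∃ C ∈ 𝓑, C ⊆ c.1 := by
  by_contra! hcon
  have hclosed : HornClosed (keyCNF 𝓑) ↑c.1 := fun d hd hdc =>
    absurd (coe_subset.mp hdc) (hcon d.1 (mem_keyCNF.mp hd).1)
  have hhead : c.2 ∈ hornClosure (keyCNF 𝓑) ↑c.1 := hΦ.2 c.1 ▸ head_mem_hornClosure hc
  exact (hΦ.1 c hc).2 (hornClosure_subset subset_rfl hclosed hhead)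

lemma Represents.exists_body_subset (hΦ : Represents 𝓑 Φ) {B : Finset α} (hB : B ∈ 𝓑)
    (hBuniv : B ≠ univ) : ∃ c ∈ Φ, c.1 ⊆ B := by
  by_contra! hcon
  have hclosed : HornClosed Φ ↑B := fun c hc hcB => absurd (coe_subset.mp hcB) (hcon c hc)
  obtain ⟨v, hv⟩ : ∃ v, v ∉ B := by simpa [eq_univ_iff_forall] using hBuniv
  have hvB : v ∈ hornClosure Φ ↑B := by
    rw [hΦ.2 B]
    exact head_mem_hornClosure (c := (B, v)) (mem_keyCNF.mpr ⟨hB, hv⟩)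
  exact hv (hornClosure_subset subset_rfl hclosed hvB)

/-- The new clauses are still implied by `Ψ_𝓑`, and they imply the old ones. -/
lemma Represents.image_prodMap (hne : ∀ B ∈ 𝓑, B.Nonempty) (hΦ : Represents 𝓑 Φ)
    {r : Finset α → Finset α} (hr : ∀ c ∈ Φ, r c.1 ∈ 𝓑 ∧ r c.1 ⊆ c.1) :
    Represents 𝓑 (Φ.image (Prod.map r id)) := by
  refine ⟨?_, fun Z => subset_antisymm ?_ ?_⟩
  · simp only [PureHorn, forall_mem_image, Prod.map_fst, Prod.map_snd, id_eq]
    exact fun c hc => ⟨hne _ (hr c hc).1, fun h => (hΦ.1 c hc).2 ((hr c hc).2 h)⟩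
  · refine hornClosure_subset_hornClosure fun W hW => ?_
    simp only [HornClosed, forall_mem_image, Prod.map_fst, Prod.map_snd, id_eq]
    intro c hc hcW
    rw [hW.eq_univ_of_keyCNF (hr c hc).1 hcW]
    trivial
  · rw [← hΦ.2 Z]
    refine hornClosure_subset_hornClosure fun W hW c hc hcW => ?_
    exact hW (Prod.map r id c) (mem_image_of_mem _ hc) ((coe_subset.mpr (hr c hc).2).trans hcW)

lemma Represents.image_fst_eq_filter_minimal (hΦ : Represents 𝓑 Φ)
    (hproper : ∀ B ∈ 𝓑, B ≠ univ) (hmin : ∀ c ∈ Φ, Minimal (· ∈ 𝓑) c.1) :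
    Φ.image Prod.fst = 𝓑.filter fun B => ∀ B' ∈ 𝓑, B' ⊆ B → B' = B := by
  ext B
  simp only [mem_image, mem_filter]
  constructor
  · rintro ⟨c, hc, rfl⟩
    exact ⟨(hmin c hc).prop, fun B' hB' hB'c => (hmin c hc).eq_of_le hB' hB'c⟩
  · rintro ⟨hB, hBmin⟩
    obtain ⟨c, hc, hcB⟩ := hΦ.exists_body_subset hB (hproper B hB)
    exact ⟨c, hc, hBmin _ (hmin c hc).prop hcB⟩

lemma exists_represents_eq_OPT (hne : ∀ B ∈ 𝓑, B.Nonempty) (μ : Finset (Finset α × α) → ℕ) :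
    ∃ Φ, Represents 𝓑 Φ ∧ μ Φ = OPT μ 𝓑 :=
  Nat.sInf_mem (s := {s | ∃ Φ, Represents 𝓑 Φ ∧ μ Φ = s}) ⟨_, _, represents_keyCNF hne, rfl⟩

lemma OPT_le {μ : Finset (Finset α × α) → ℕ} (hΦ : Represents 𝓑 Φ) : OPT μ 𝓑 ≤ μ Φ :=
  Nat.sInf_le ⟨Φ, hΦ, rfl⟩

end KeyCNF

section Measures

variable {α : Type*} [DecidableEq α] {Φ : Finset (Finset α × α)} {r : Finset α → Finset α}

lemma IsMeasure.image_prodMap_le {μ : Finset (Finset α × α) → ℕ} (hμ : IsMeasure μ)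
    (hr : ∀ c ∈ Φ, r c.1 ⊆ c.1) : μ (Φ.image (Prod.map r id)) ≤ μ Φ := by
  have hbodies : (Φ.image (Prod.map r id)).image Prod.fst = (Φ.image Prod.fst).image r := by
    simp only [image_image]
    rfl
  have hB : sizeB (Φ.image (Prod.map r id)) ≤ sizeB Φ := by
    rw [sizeB, hbodies]
    exact card_image_le
  have hBA : sizeBA (Φ.image (Prod.map r id)) ≤ sizeBA Φ := by
    rw [sizeBA, hbodies]
    refine (sum_image_le_of_nonneg fun _ _ => Nat.zero_le _).trans (sum_le_sum ?_)
    simp only [forall_mem_image]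
    exact fun c hc => card_le_card (hr c hc)
  have hC : sizeC (Φ.image (Prod.map r id)) ≤ sizeC Φ := card_image_le
  have hL : sizeL (Φ.image (Prod.map r id)) ≤ sizeL Φ :=
    (sum_image_le_of_nonneg fun _ _ => Nat.zero_le _).trans
      (sum_le_sum fun c hc => Nat.add_le_add_right (card_le_card (hr c hc)) 1)
  rcases hμ with rfl | rfl | rfl | rfl | rfl | rfl
  · exact hB
  · exact hBA
  · exact Nat.add_le_add hBA hC
  · exact hC
  · exact Nat.add_le_add hB hC
  · exact hL

end Measures

/-- For any of the six measures and any family `𝓑 ⊆ 2^V \ {V}` of nonempty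
sets, some `μ`-minimum representation of `h_𝓑` has body set exactly `𝓑^⊥`,
the family of inclusion-minimal members of `𝓑`. -/
theorem stmt0 {V : Type*} [Fintype V] [DecidableEq V]
    (𝓑 : Finset (Finset V))
    (hne : ∀ B ∈ 𝓑, B.Nonempty) (hproper : ∀ B ∈ 𝓑, B ≠ Finset.univ)
    (μ : Finset (Finset V × V) → ℕ) (hμ : IsMeasure μ) :
    ∃ Φ : Finset (Finset V × V), Represents 𝓑 Φ ∧ μ Φ = OPT μ 𝓑 ∧
      Φ.image Prod.fst = 𝓑.filter fun B => ∀ B' ∈ 𝓑, B' ⊆ B → B' = B := by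
  obtain ⟨Φ, hΦ, hΦopt⟩ := exists_represents_eq_OPT hne μ
  obtain ⟨r, hr⟩ := exists_minimal_le_selector (· ∈ 𝓑)
  have hrΦ : ∀ c ∈ Φ, r c.1 ⊆ c.1 ∧ Minimal (· ∈ 𝓑) (r c.1) := fun c hc =>
    let ⟨C, hC, hCc⟩ := hΦ.exists_mem_subset_body hc
    hr c.1 C hC hCc
  have hΦ' := hΦ.image_prodMap hne fun c hc => ⟨(hrΦ c hc).2.prop, (hrΦ c hc).1⟩
  refine ⟨_, hΦ', ?_, hΦ'.image_fst_eq_filter_minimal hproper ?_⟩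
  · exact le_antisymm (hΦopt ▸ hμ.image_prodMap_le fun c hc => (hrΦ c hc).1) (OPT_le hΦ')
  · exact forall_mem_image.mpr fun c hc => (hrΦ c hc).2
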